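/- arXiv:1602.04061 — 7 statements merged into one kernel-verified Lean document; each statement's English description precedes it below -/
import Mathlib

section
/- Let A be a finite alphabet, x : ℤ × ℤ → A a configuration, a ∈ A, and y the dyadic encoding of x with filler a. Let P be a pattern of size n ≥ 1 and let (n₀, k₀) ∈ ℤ × ℤ. Then P appears in x at position (n₀, k₀) if and only if the function ℓ defined by ℓ(c) = y(n₀ + n + 1, 2^{n+1}·k₀ + c) for 0 ≤ c ≤ 2^{n+1} − 1 belongs to the set p̃ of encoded linear patterns of P. -/
/-- `y` is the dyadic encoding of the configuration `x : ℤ × ℤ → A` with filler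
letter `a` (the second component `π₂(Φ(x))` of the paper's map `Φ`): it satisfies
`y(n+1, 2k) = x(n, k)`, `y(n+1, 2k+1) = y(n, k)`, and `y(n, -1) = a` along the
fracture column. -/
def IsDyadicEncoding {A : Type} (x : ℤ × ℤ → A) (a : A) (y : ℤ × ℤ → A) : Prop :=
  (∀ n k : ℤ, y (n + 1, 2 * k) = x (n, k)) ∧
  (∀ n k : ℤ, y (n + 1, 2 * k + 1) = y (n, k)) ∧
  (∀ n : ℤ, y (n, -1) = a)

/-- The support of size `n`: `𝕌_n = {(p,q) : p ≤ n-1, q ≤ 2^p - 1}` (natural subtraction). -/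
def U (n : ℕ) : Set (ℕ × ℕ) := {pq | pq.1 ≤ n - 1 ∧ pq.2 ≤ 2 ^ pq.1 - 1}

/-- The pattern `P : 𝕌_n → A` appears in the configuration `x` at position `(n₀, k₀)`. -/
def AppearsAt {A : Type} {n : ℕ} (P : U n → A) (x : ℤ × ℤ → A) (g : ℤ × ℤ) : Prop :=
  ∀ pq : U n, x (g.1 + (pq.1.1 : ℤ), 2 ^ pq.1.1 * g.2 + (pq.1.2 : ℤ)) = P pq

/-- The set `p̃` of encoded linear patterns of a pattern `P : 𝕌_n → A`: functions
`ℓ : {0,…,2^(n+1)-1} → A` obtained by reading, in some dyadic encoding `y'` of some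
configuration `x'` in which `P` appears at position `(0, 0)`, the row `n + 1`. -/
def encodedLinearPatterns {A : Type} (n : ℕ) (P : U n → A) :
    Set (Fin (2 ^ (n + 1)) → A) :=
  {ℓ | ∃ (x' : ℤ × ℤ → A) (a' : A) (y' : ℤ × ℤ → A),
    AppearsAt P x' (0, 0) ∧ IsDyadicEncoding x' a' y' ∧
    ∀ c : Fin (2 ^ (n + 1)), ℓ c = y' ((n : ℤ) + 1, ((c : ℕ) : ℤ))}

/-!
In an encoding, a step down to the right keeps the letter and a step down to the left from
`(m, k)` reads `x (m, k)`, so the letter of `x` at `(m + p, 2^p k + q)` sits in any encoding `y`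
on row `m + p + s + 1`, at an offset `< 2^(p+s+1)` from column `2^(p+s+1) k`. Hence the word read
below `(n₀, k₀)` determines the pattern there, which gives the reverse implication. For the
forward one, re-root `y` at `(n₀, k₀)`: this is again an encoding, of a configuration with the
same pattern at `(0, 0)` and the same word on row `n + 1`.
-/

/-- The offset at which row `p + s + 1` of a block stores its cell `(p, q)`. -/
def readoutColumn (s q : ℕ) : ℕ := 2 ^ (s + 1) * q + (2 ^ s - 1)

theorem readoutColumn_lt {p q : ℕ} (s : ℕ) (hq : q < 2 ^ p) :
    readoutColumn s q < 2 ^ (p + s + 1) :=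
  calc readoutColumn s q < 2 ^ (s + 1) * (q + 1) := by
        have := Nat.two_pow_pos s
        rw [readoutColumn, mul_add_one, pow_succ]
        omega
    _ ≤ 2 ^ (s + 1) * 2 ^ p := Nat.mul_le_mul_left _ hq
    _ = 2 ^ (p + s + 1) := by rw [← pow_add]; ring_nf

namespace IsDyadicEncoding

variable {A : Type} {x : ℤ × ℤ → A} {a : A} {y : ℤ × ℤ → A}

theorem apply_pow_mul_add_pow_sub_one (hy : IsDyadicEncoding x a y) (s : ℕ) (m k : ℤ) :
    y (m + s, 2 ^ s * k + (2 ^ s - 1)) = y (m, k) := by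
  induction s with
  | zero => simp
  | succ s ih =>
    rw [← ih, ← hy.2.1 (m + s)]
    congr 2 <;> push_cast [pow_succ] <;> ring

theorem apply_readoutColumn (hy : IsDyadicEncoding x a y) (p s : ℕ) (m k : ℤ) (q : ℕ) :
    y (m + (p + s : ℕ) + 1, 2 ^ (p + s + 1) * k + readoutColumn s q) =
      x (m + p, 2 ^ p * k + q) := by
  rw [← hy.1, ← hy.apply_pow_mul_add_pow_sub_one s (m + p + 1), readoutColumn]
  congr 2 <;> push_cast [Nat.one_le_two_pow, pow_succ] <;> ring

end IsDyadicEncoding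

variable {A : Type}

/-- Row `m ≥ 0` of `reroot y n₀ k₀` is row `n₀ + m` of `y` from the first cell below `(n₀, k₀)`
on; the rows `m < 0` are then forced by `y (m + 1, 2k + 1) = y (m, k)`. -/
def reroot (y : ℤ × ℤ → A) (n₀ k₀ : ℤ) : ℤ × ℤ → A
  | (Int.ofNat j, c) => y (n₀ + j, 2 ^ j * k₀ + c)
  | (Int.negSucc j, c) => y (n₀, k₀ + 2 ^ (j + 1) * (c + 1) - 1)

theorem reroot_natCast (y : ℤ × ℤ → A) (n₀ k₀ : ℤ) (j : ℕ) (c : ℤ) :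
    reroot y n₀ k₀ (j, c) = y (n₀ + j, 2 ^ j * k₀ + c) := rfl

theorem reroot_negSucc (y : ℤ × ℤ → A) (n₀ k₀ : ℤ) (j : ℕ) (c : ℤ) :
    reroot y n₀ k₀ (Int.negSucc j, c) = y (n₀, k₀ + 2 ^ (j + 1) * (c + 1) - 1) := rfl

section Reroot

variable {x : ℤ × ℤ → A} {a : A} {y : ℤ × ℤ → A}

theorem reroot_add_one_two_mul_add_one (hy : IsDyadicEncoding x a y) (n₀ k₀ m k : ℤ) :
    reroot y n₀ k₀ (m + 1, 2 * k + 1) = reroot y n₀ k₀ (m, k) := by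
  rcases m with j | _ | j
  · rw [Int.ofNat_eq_natCast, ← Nat.cast_succ, reroot_natCast, reroot_natCast,
      ← hy.2.1 (n₀ + j)]
    congr 2 <;> push_cast [pow_succ] <;> ring
  · rw [reroot_negSucc, show Int.negSucc 0 + 1 = ((0 : ℕ) : ℤ) from rfl, reroot_natCast]
    congr 2 <;> push_cast <;> ring
  · rw [reroot_negSucc, show Int.negSucc (j + 1) + 1 = Int.negSucc j from rfl, reroot_negSucc]
    congr 2
    ring

theorem reroot_neg_one (hy : IsDyadicEncoding x a y) (n₀ k₀ m : ℤ) :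
    reroot y n₀ k₀ (m, -1) = y (n₀, k₀ - 1) := by
  rcases m with j | j
  · rw [Int.ofNat_eq_natCast, reroot_natCast, ← hy.apply_pow_mul_add_pow_sub_one j n₀]
    congr 2
    ring
  · rw [reroot_negSucc]
    congr 2
    ring

theorem IsDyadicEncoding.reroot (hy : IsDyadicEncoding x a y) (n₀ k₀ : ℤ) :
    IsDyadicEncoding (fun g => _root_.reroot y n₀ k₀ (g.1 + 1, 2 * g.2)) (y (n₀, k₀ - 1))
      (_root_.reroot y n₀ k₀) :=
  ⟨fun _ _ => rfl, reroot_add_one_two_mul_add_one hy n₀ k₀, reroot_neg_one hy n₀ k₀⟩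

theorem AppearsAt.reroot {n : ℕ} {P : U n → A} {n₀ k₀ : ℤ} (hy : IsDyadicEncoding x a y)
    (hP : AppearsAt P x (n₀, k₀)) :
    AppearsAt P (fun g => _root_.reroot y n₀ k₀ (g.1 + 1, 2 * g.2)) (0, 0) := by
  intro pq
  rw [← hP pq, ← hy.1]
  simp only [zero_add, mul_zero, ← Nat.cast_succ, reroot_natCast]
  congr 2 <;> push_cast [pow_succ] <;> ring

end Reroot

theorem appears_iff_encodedLinear_general {A : Type}
    (x : ℤ × ℤ → A) (a : A) (y : ℤ × ℤ → A) (hy : IsDyadicEncoding x a y)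
    (n : ℕ) (P : U n → A) (n₀ k₀ : ℤ) :
    AppearsAt P x (n₀, k₀) ↔
      (fun c : Fin (2 ^ (n + 1)) =>
          y (n₀ + (n : ℤ) + 1, 2 ^ (n + 1) * k₀ + ((c : ℕ) : ℤ)))
        ∈ encodedLinearPatterns n P := by
  constructor
  · refine fun hP => ⟨_, _, reroot y n₀ k₀, hP.reroot hy, hy.reroot n₀ k₀, fun c => ?_⟩
    rw [← Nat.cast_add_one, reroot_natCast, Nat.cast_add_one, add_assoc]
  · rintro ⟨x', a', y', hP', hy', hℓ⟩ ⟨⟨p, q⟩, hp, hq⟩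
    obtain ⟨s, rfl⟩ : ∃ s, n = p + s := ⟨n - p, by omega⟩
    have hc := readoutColumn_lt s (Nat.lt_of_le_pred (Nat.two_pow_pos p) hq)
    calc x (n₀ + p, 2 ^ p * k₀ + q)
        = y (n₀ + (p + s : ℕ) + 1, 2 ^ (p + s + 1) * k₀ + readoutColumn s q) :=
          (hy.apply_readoutColumn p s n₀ k₀ q).symm
      _ = y' ((p + s : ℕ) + 1, readoutColumn s q) := hℓ ⟨_, hc⟩
      _ = x' (0 + p, 2 ^ p * 0 + q) := by
          simpa only [mul_zero, zero_add] using hy'.apply_readoutColumn p s 0 0 q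
      _ = P ⟨(p, q), hp, hq⟩ := hP' ⟨(p, q), hp, hq⟩

/-- A pattern `P` of size `n ≥ 1` appears in `x` at position `(n₀, k₀)` if and only if
the linear word read in the dyadic encoding `y` of `x` on row `n₀ + n + 1` at columns
`2^(n+1)·k₀ + c`, `0 ≤ c ≤ 2^(n+1) - 1`, belongs to the set `p̃` of encoded linear
patterns of `P`. -/
theorem appears_iff_encodedLinear {A : Type} [Fintype A] [Nonempty A]
    (x : ℤ × ℤ → A) (a : A) (y : ℤ × ℤ → A) (hy : IsDyadicEncoding x a y)
    (n : ℕ) (hn : 1 ≤ n) (P : U n → A) (n₀ k₀ : ℤ) :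
    AppearsAt P x (n₀, k₀) ↔
      (fun c : Fin (2 ^ (n + 1)) =>
          y (n₀ + (n : ℤ) + 1, 2 ^ (n + 1) * k₀ + ((c : ℕ) : ℤ)))
        ∈ encodedLinearPatterns n P :=
  appears_iff_encodedLinear_general x a y hy n P n₀ k₀
end

section
/- Let A be a finite alphabet, x : ℤ × ℤ → A a configuration, a ∈ A, and y the dyadic encoding of x with filler a. Then for every n ≥ 1, every (n₀, k₀) ∈ ℤ × ℤ, every natural number k and every integer c with 0 ≤ c ≤ 2^{n+1} − 1, one has y(n₀ + n + 1 + k, 2^{n+1+k}·k₀ + 2^k·(c + 1) − 1) = y(n₀ + n + 1, 2^{n+1}·k₀ + c); i.e. every entry of the bottom linear encoding of the pattern of x at position (n₀, k₀) with support 𝕌_n reappears, at explicitly computable positions, on every row k further below. -/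
/-! Along the rightmost path below a cell, `(m, j) ↦ (m + 1, 2j + 1)`, the encoding only copies
its value downward; after `k` steps that path is at `(m + k, 2^k (j + 1) - 1)`. -/

theorem apply_rightmost_descendant {A : Type} (y : ℤ × ℤ → A)
    (hright : ∀ n k : ℤ, y (n + 1, 2 * k + 1) = y (n, k)) (m j : ℤ) (k : ℕ) :
    y (m + k, 2 ^ k * (j + 1) - 1) = y (m, j) := by
  induction k with
  | zero => simp
  | succ k ih =>
    rw [← ih, ← hright (m + k)]
    congr 2
    · push_cast; ring
    · ring

theorem dyadicEncoding_entries_reappear_general {A : Type}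
    (x : ℤ × ℤ → A) (a : A) (y : ℤ × ℤ → A) (hy : IsDyadicEncoding x a y)
    (n : ℕ) (n₀ k₀ : ℤ) (k : ℕ) (c : ℤ) :
    y (n₀ + n + 1 + k, 2 ^ (n + 1 + k) * k₀ + 2 ^ k * (c + 1) - 1)
      = y (n₀ + n + 1, 2 ^ (n + 1) * k₀ + c) := by
  convert apply_rightmost_descendant y hy.2.1 (n₀ + n + 1) (2 ^ (n + 1) * k₀ + c) k using 3
  ring

/-- Every entry of the bottom linear encoding of the pattern of `x` at position
`(n₀, k₀)` with support `𝕌_n` reappears, at explicitly computable positions, on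
every row `k` further below. -/
theorem dyadicEncoding_entries_reappear {A : Type} [Fintype A] [Nonempty A]
    (x : ℤ × ℤ → A) (a : A) (y : ℤ × ℤ → A) (hy : IsDyadicEncoding x a y)
    (n : ℕ) (hn : 1 ≤ n) (n₀ k₀ : ℤ) (k : ℕ) (c : ℤ)
    (hc0 : 0 ≤ c) (hc1 : c ≤ 2 ^ (n + 1) - 1) :
    y (n₀ + n + 1 + k, 2 ^ (n + 1 + k) * k₀ + 2 ^ k * (c + 1) - 1)
      = y (n₀ + n + 1, 2 ^ (n + 1) * k₀ + c) :=
  dyadicEncoding_entries_reappear_general x a y hy n n₀ k₀ k c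
end

section
/- Let A be a finite alphabet, x : ℤ × ℤ → A a configuration, and P a pattern of size n ≥ 1. Then P appears in x (at some position) if and only if for every filler letter a ∈ A, letting y denote the dyadic encoding of x with filler a, there exist an integer k ≥ 1 and a function ℓ ∈ p̃^{(k)} ⊆ split(P) such that ℓ appears in y at some position (n₀, k₀) ∈ ℤ × ℤ. -/
/-- The set `p̃⁽ᵏ⁾` of linear patterns encoding `P : 𝕌_n → A` on the row `n + k` of a
dyadic encoding: functions `ℓ : {0,…,2^(n+k)-1} → A` obtained by reading, in some
dyadic encoding `y'` of some configuration `x'` in which `P` appears at position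
`(0, 0)`, the row `n + k`. The set `split(P)` is the union of the `p̃⁽ᵏ⁾` over `k ≥ 1`. -/
def encodedLinearPatternsAtDepth {A : Type} (n k : ℕ) (P : U n → A) :
    Set (Fin (2 ^ (n + k)) → A) :=
  {ℓ | ∃ (x' : ℤ × ℤ → A) (a' : A) (y' : ℤ × ℤ → A),
    AppearsAt P x' (0, 0) ∧ IsDyadicEncoding x' a' y' ∧
    ∀ c : Fin (2 ^ (n + k)), ℓ c = y' ((n : ℤ) + (k : ℤ), ((c : ℕ) : ℤ))}

/-!
Row `r + m` of a dyadic encoding, read on the `2 ^ m` cells below `(r, v)`, records exactly the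
cell `y (r, v)` together with the pattern of `x` of height `m` at `(r, v)`: even columns copy the
row of `x` just above, odd columns copy the previous row of `y`. Hence a block of a split row
appearing in `y` forces `P` to appear in `x`, and conversely an occurrence of `P` in `x` can be
transplanted to position `(0, 0)` of a new configuration, provided the row above it carries the
letter `y (n₀, k₀)` that feeds the last column of the block.
-/

def dyadicEncode {A : Type} (x : ℤ × ℤ → A) (a : A) (r j : ℤ) : A :=
  if j = -1 then a
  else if 2 ∣ j then x (r - 1, j / 2)
  else dyadicEncode x a (r - 1) ((j - 1) / 2)
termination_by j.natAbs
decreasing_by omega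

theorem forall_lt_two_pow_succ {m : ℕ} {f : ℕ → Prop} :
    (∀ c < 2 ^ (m + 1), f c) ↔ ∀ d < 2 ^ m, f (2 * d) ∧ f (2 * d + 1) := by
  rw [pow_succ]
  refine ⟨fun h d hd => ⟨h _ (by omega), h _ (by omega)⟩, fun h c hc => ?_⟩
  obtain ⟨d, rfl | rfl⟩ := Nat.even_or_odd' c
  exacts [(h d (by omega)).1, (h d (by omega)).2]

section DyadicEncoding

variable {A : Type} {x x' y y' : ℤ × ℤ → A} {a a' : A}

theorem isDyadicEncoding_dyadicEncode (x : ℤ × ℤ → A) (a : A) :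
    IsDyadicEncoding x a (Function.uncurry (dyadicEncode x a)) := by
  refine ⟨fun r k => ?_, fun r k => ?_, fun r => by simp [dyadicEncode]⟩
  · rw [Function.uncurry_apply_pair, dyadicEncode, if_neg (by omega), if_pos (dvd_mul_right 2 k)]
    simp
  · rcases eq_or_ne k (-1) with rfl | hk
    · simp [dyadicEncode]
    · rw [Function.uncurry_apply_pair, dyadicEncode, if_neg (by omega), if_neg (by omega)]
      simp

namespace IsDyadicEncoding

theorem apply_even (hy : IsDyadicEncoding x a y) (r v : ℤ) (m d : ℕ) :
    y (r + ↑(m + 1), 2 ^ (m + 1) * v + ↑(2 * d)) = x (r + m, 2 ^ m * v + d) := by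
  convert hy.1 (r + m) (2 ^ m * v + d) using 3 <;> (push_cast; ring)

theorem apply_odd (hy : IsDyadicEncoding x a y) (r v : ℤ) (m d : ℕ) :
    y (r + ↑(m + 1), 2 ^ (m + 1) * v + ↑(2 * d + 1)) = y (r + m, 2 ^ m * v + d) := by
  convert hy.2.1 (r + m) (2 ^ m * v + d) using 3 <;> (push_cast; ring)

theorem row_block_eq_iff (hy : IsDyadicEncoding x a y) (hy' : IsDyadicEncoding x' a' y')
    (r v r' v' : ℤ) (m : ℕ) :
    (∀ c : ℕ, c < 2 ^ m → y (r + m, 2 ^ m * v + c) = y' (r' + m, 2 ^ m * v' + c)) ↔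
      y (r, v) = y' (r', v') ∧ ∀ p < m, ∀ q : ℕ, q < 2 ^ p →
        x (r + p, 2 ^ p * v + q) = x' (r' + p, 2 ^ p * v' + q) := by
  induction m with
  | zero => simp
  | succ m ih =>
    simp only [forall_lt_two_pow_succ, hy.apply_even, hy'.apply_even, hy.apply_odd,
      hy'.apply_odd, imp_and, forall_and, ih, Nat.forall_lt_succ_right]
    tauto

end IsDyadicEncoding

/-- Row `-1` of the shifted configuration is free, and the encoding copies it into `(0, 0)`. -/
theorem exists_isDyadicEncoding_shift (x : ℤ × ℤ → A) (a b : A) (g : ℤ × ℤ) :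
    ∃ x' y', IsDyadicEncoding x' a y' ∧ y' (0, 0) = b ∧
      ∀ (p : ℕ) (q : ℤ), x' (p, q) = x (g.1 + p, 2 ^ p * g.2 + q) := by
  let x' : ℤ × ℤ → A := fun pq =>
    if 0 ≤ pq.1 then x (g.1 + pq.1, 2 ^ pq.1.toNat * g.2 + pq.2) else b
  have hy' := isDyadicEncoding_dyadicEncode x' a
  refine ⟨x', _, hy', ?_, fun p q => by simp [x']⟩
  simpa [x'] using hy'.1 (-1) 0

end DyadicEncoding

theorem le_and_lt_two_pow_of_mem_U {n : ℕ} {pq : ℕ × ℕ} (h : pq ∈ U n) :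
    pq.1 ≤ n ∧ pq.2 < 2 ^ pq.1 := by
  have := Nat.one_le_two_pow (n := pq.1)
  simp only [U, Set.mem_ofPred_eq] at h
  omega

theorem appears_iff_split_appears_general {A : Type}
    (x : ℤ × ℤ → A) (n : ℕ) (P : U n → A) :
    (∃ g : ℤ × ℤ, AppearsAt P x g) ↔
      ∀ (a : A) (y : ℤ × ℤ → A), IsDyadicEncoding x a y →
        ∃ k : ℕ, 1 ≤ k ∧ ∃ ℓ ∈ encodedLinearPatternsAtDepth n k P, ∃ n₀ k₀ : ℤ,
          ∀ c : Fin (2 ^ (n + k)),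
            y (n₀ + (n : ℤ) + (k : ℤ), 2 ^ (n + k) * k₀ + ((c : ℕ) : ℤ)) = ℓ c := by
  constructor
  · rintro ⟨g, hg⟩ a y hy
    obtain ⟨x', y', hy', hy'0, hx'⟩ := exists_isDyadicEncoding_shift x a (y g) g
    have hrow := (hy.row_block_eq_iff hy' g.1 g.2 0 0 (n + 1)).2
      ⟨hy'0.symm, fun p _ q _ => by simpa using (hx' p q).symm⟩
    refine ⟨1, le_rfl, fun c => y' (n + 1, c), ⟨x', a, y', fun ⟨(p, q), _⟩ => ?_, hy', fun c => rfl⟩,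
      g.1, g.2, fun c => ?_⟩
    · simpa [hx'] using hg ⟨(p, q), ‹_›⟩
    · simpa [add_assoc] using hrow c c.2
  · intro h
    obtain ⟨k, hk, ℓ, ⟨x', a', y', hP, hy', hℓ⟩, n₀, k₀, happ⟩ :=
      h (x 0) _ (isDyadicEncoding_dyadicEncode x (x 0))
    have hpat := ((isDyadicEncoding_dyadicEncode x (x 0)).row_block_eq_iff hy' n₀ k₀ 0 0
      (n + k)).1 fun c hc => by simpa [add_assoc, hℓ] using happ ⟨c, hc⟩
    refine ⟨(n₀, k₀), fun ⟨(p, q), hpq⟩ => ?_⟩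
    obtain ⟨hp, hq⟩ := le_and_lt_two_pow_of_mem_U hpq
    simpa using (hpat.2 p (by omega) q hq).trans (by simpa using hP ⟨(p, q), hpq⟩)

/-- A pattern `P` of size `n ≥ 1` appears in `x` (at some position) if and only if, for
every filler letter `a` and corresponding dyadic encoding `y` of `x`, some element
`ℓ ∈ p̃⁽ᵏ⁾ ⊆ split(P)` (for some `k ≥ 1`) appears in `y` at some position `(n₀, k₀)`. -/
theorem appears_iff_split_appears {A : Type} [Fintype A] [Nonempty A]
    (x : ℤ × ℤ → A) (n : ℕ) (hn : 1 ≤ n) (P : U n → A) :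
    (∃ g : ℤ × ℤ, AppearsAt P x g) ↔
      ∀ (a : A) (y : ℤ × ℤ → A), IsDyadicEncoding x a y →
        ∃ k : ℕ, 1 ≤ k ∧ ∃ ℓ ∈ encodedLinearPatternsAtDepth n k P, ∃ n₀ k₀ : ℤ,
          ∀ c : Fin (2 ^ (n + k)),
            y (n₀ + (n : ℤ) + (k : ℤ), 2 ^ (n + k) * k₀ + ((c : ℕ) : ℤ)) = ℓ c :=
  appears_iff_split_appears_general x n P
end

section
/- Let A be a finite alphabet, x : ℤ × ℤ → A a configuration, a ∈ A, and y the dyadic encoding of x with filler a. Then for all (n, k) ∈ ℤ × ℤ and every integer m ≥ 1, one has y(n + m, 2^m·k + 2^{m−1} − 1) = x(n, k). (In the paper's notation: x_g = π₂(Φ(x))_{g·α^m·β^{2^{m−1}−1}} = π₂(Φ(x))_{g·α·(αβ)^{m−1}} for all m ≥ 1.) -/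
/-
Proof idea: the cell `(n + m, 2^m·k + 2^m - 1)` is reached from `(n, k)` by `m` steps to the
bottom-right child, along which `y` is constant by `y(n+1, 2k+1) = y(n, k)`. Starting this
walk at the bottom-left child `(n + 1, 2k)`, where `y` equals `x(n, k)`, gives the claim.
-/

theorem apply_alphaBeta_pow_descendant {A : Type} {y : ℤ × ℤ → A}
    (hy : ∀ n k : ℤ, y (n + 1, 2 * k + 1) = y (n, k)) (n k : ℤ) (m : ℕ) :
    y (n + m, 2 ^ m * k + 2 ^ m - 1) = y (n, k) := by
  induction m with
  | zero => simp
  | succ m ih =>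
    have hcell : ((n + (m + 1 : ℕ) : ℤ), (2 : ℤ) ^ (m + 1) * k + 2 ^ (m + 1) - 1)
        = (n + m + 1, 2 * (2 ^ m * k + 2 ^ m - 1) + 1) := by
      ext <;> push_cast <;> ring
    rw [hcell, hy, ih]

theorem dyadicEncoding_copies_below_general {A : Type}
    (x : ℤ × ℤ → A) (a : A) (y : ℤ × ℤ → A) (hy : IsDyadicEncoding x a y)
    (n k : ℤ) (m : ℕ) (hm : 1 ≤ m) :
    y (n + m, 2 ^ m * k + 2 ^ (m - 1) - 1) = x (n, k) := by
  obtain ⟨hleft, hright, -⟩ := hy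
  obtain ⟨j, rfl⟩ := Nat.exists_eq_add_of_le' hm
  have hcell : ((n + (j + 1 : ℕ) : ℤ), (2 : ℤ) ^ (j + 1) * k + 2 ^ (j + 1 - 1) - 1)
      = (n + 1 + j, 2 ^ j * (2 * k) + 2 ^ j - 1) := by
    ext <;> simp only [Nat.add_sub_cancel] <;> push_cast <;> ring
  rw [hcell, apply_alphaBeta_pow_descendant hright, hleft]

/-- In the dyadic encoding, the value `x(n, k)` reappears on every row `m ≥ 1` below:
`y(n + m, 2^m·k + 2^(m-1) - 1) = x(n, k)`; in the paper's notation
`x_g = π₂(Φ(x))_{g·αᵐ·β^(2^(m-1)-1)}`. -/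
theorem dyadicEncoding_copies_below {A : Type} [Fintype A] [Nonempty A]
    (x : ℤ × ℤ → A) (a : A) (y : ℤ × ℤ → A) (hy : IsDyadicEncoding x a y)
    (n k : ℤ) (m : ℕ) (hm : 1 ≤ m) :
    y (n + m, 2 ^ m * k + 2 ^ (m - 1) - 1) = x (n, k) :=
  dyadicEncoding_copies_below_general x a y hy n k m hm
end

section
/- Let A be a finite alphabet, x : ℤ × ℤ → A a configuration, a ∈ A, and y the dyadic encoding of x with filler a. Then for all (n, k) ∈ ℤ × ℤ and every natural number j, one has y(n + j, 2^j·k + 2^j − 1) = y(n, k); i.e. the second layer of the dyadic encoding is constant along rightmost-descendant chains: π₂(Φ(x))_{g·(αβ)^j} = π₂(Φ(x))_g for all j ≥ 0. -/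
/-- The paper's `g ↦ g·αβ`. -/
def rightChild (g : ℤ × ℤ) : ℤ × ℤ :=
  (g.1 + 1, 2 * g.2 + 1)

theorem rightChild_iterate (n k : ℤ) (j : ℕ) :
    rightChild^[j] (n, k) = (n + j, 2 ^ j * k + 2 ^ j - 1) := by
  induction j with
  | zero => simp
  | succ j ih =>
    rw [Function.iterate_succ_apply', ih, rightChild, Prod.mk.injEq]
    constructor <;> push_cast <;> ring

theorem dyadicEncoding_constant_on_chains_general {A : Type}
    (x : ℤ × ℤ → A) (a : A) (y : ℤ × ℤ → A) (hy : IsDyadicEncoding x a y)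
    (n k : ℤ) (j : ℕ) :
    y (n + j, 2 ^ j * k + 2 ^ j - 1) = y (n, k) := by
  have hinvariant : y ∘ rightChild = y := funext fun g => hy.2.1 g.1 g.2
  rw [← rightChild_iterate]
  exact congrFun (Function.iterate_invariant hinvariant j) (n, k)

/-- The second layer of the dyadic encoding is constant along rightmost-descendant
chains: `y(n + j, 2^j·k + 2^j - 1) = y(n, k)` for all `j ≥ 0`, i.e.
`π₂(Φ(x))_{g·(αβ)ʲ} = π₂(Φ(x))_g`. -/
theorem dyadicEncoding_constant_on_chains {A : Type} [Fintype A] [Nonempty A]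
    (x : ℤ × ℤ → A) (a : A) (y : ℤ × ℤ → A) (hy : IsDyadicEncoding x a y)
    (n k : ℤ) (j : ℕ) :
    y (n + j, 2 ^ j * k + 2 ^ j - 1) = y (n, k) :=
  dyadicEncoding_constant_on_chains_general x a y hy n k j
end

section
/- For every integer n ≥ 1, the map (p, q) ↦ 2^{n+1−p}·q + 2^{n−p} − 1 is injective on the support 𝕌_n = {(p, q) ∈ ℕ × ℕ : p ≤ n − 1 and q ≤ 2^p − 1}, and all its values lie in {0, 1, …, 2^{n+1} − 1}. (Hence the cells of a pattern with support 𝕌_n are encoded at pairwise distinct positions of the linear support L_n of size 2^{n+1} lying on the row n+1 rows below, so the whole information of the pattern is contained in a single linear pattern of its dyadic encoding.) -/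
/-!
Shifted by one, the encoding of the cell `(p, q)` is `2^(n-p) · (2q + 1)`: the exponent of `2`
recovers the row `p` and the odd part recovers the column `q`, by uniqueness of the
factorisation `2^k · odd`. Since `2q + 1 ≤ 2^(p+1)`, the value is at most `2^(n+1)`.
-/

theorem Nat.Prime.pow_mul_eq_pow_mul_of_not_dvd {p a b m m' : ℕ} (hp : p.Prime)
    (hm : ¬p ∣ m) (hm' : ¬p ∣ m') (h : p ^ a * m = p ^ b * m') : a = b ∧ m = m' := by
  have hmm' : m = m' := by
    rw [← Nat.ordCompl_pow_mul_of_not_dvd a hp hm, h, Nat.ordCompl_pow_mul_of_not_dvd b hp hm']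
  subst hmm'
  have hm0 : 0 < m := Nat.pos_of_ne_zero (by rintro rfl; exact hm (dvd_zero p))
  exact ⟨Nat.pow_right_injective hp.two_le (Nat.eq_of_mul_eq_mul_right hm0 h), rfl⟩

theorem two_pow_succ_sub_mul_add_two_pow_sub {n p : ℕ} (hp : p ≤ n) (q : ℕ) :
    2 ^ (n + 1 - p) * q + 2 ^ (n - p) = 2 ^ (n - p) * (2 * q + 1) := by
  rw [show n + 1 - p = n - p + 1 by omega, pow_succ]
  ring

theorem two_mul_add_one_le_two_pow_succ {p q : ℕ} (hq : q ≤ 2 ^ p - 1) :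
    2 * q + 1 ≤ 2 ^ (p + 1) := by
  have := Nat.one_le_two_pow (n := p)
  rw [pow_succ]
  omega

theorem dyadic_cell_encoding_injective_general (n : ℕ) :
    Set.InjOn (fun pq : ℕ × ℕ => 2 ^ (n + 1 - pq.1) * pq.2 + 2 ^ (n - pq.1) - 1) (U n) ∧
    ∀ pq ∈ U n, 2 ^ (n + 1 - pq.1) * pq.2 + 2 ^ (n - pq.1) - 1 ≤ 2 ^ (n + 1) - 1 := by
  constructor
  · rintro ⟨p₁, q₁⟩ ⟨hp₁, -⟩ ⟨p₂, q₂⟩ ⟨hp₂, -⟩ h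
    dsimp only at h hp₁ hp₂
    rw [two_pow_succ_sub_mul_add_two_pow_sub (by omega),
      two_pow_succ_sub_mul_add_two_pow_sub (by omega)] at h
    obtain ⟨hexp, hodd⟩ := Nat.prime_two.pow_mul_eq_pow_mul_of_not_dvd (by omega) (by omega)
      (Nat.sub_one_cancel (by positivity) (by positivity) h)
    rw [Prod.mk.injEq]
    omega
  · rintro ⟨p, q⟩ ⟨hp, hq⟩
    dsimp only at hp hq ⊢
    rw [two_pow_succ_sub_mul_add_two_pow_sub (by omega)]
    calc 2 ^ (n - p) * (2 * q + 1) - 1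
        ≤ 2 ^ (n - p) * 2 ^ (p + 1) - 1 := by gcongr; exact two_mul_add_one_le_two_pow_succ hq
      _ = 2 ^ (n + 1) - 1 := by rw [← pow_add, show n - p + (p + 1) = n + 1 by omega]

/-- For `n ≥ 1`, the map `(p, q) ↦ 2^(n+1-p)·q + 2^(n-p) - 1` is injective on the
support `𝕌_n` and takes all its values in `{0, 1, …, 2^(n+1) - 1}`: the cells of a
pattern with support `𝕌_n` are encoded at pairwise distinct positions of the linear
support of size `2^(n+1)` on the row `n+1` rows below. -/
theorem dyadic_cell_encoding_injective (n : ℕ) (hn : 1 ≤ n) :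
    Set.InjOn (fun pq : ℕ × ℕ => 2 ^ (n + 1 - pq.1) * pq.2 + 2 ^ (n - pq.1) - 1) (U n) ∧
    ∀ pq ∈ U n, 2 ^ (n + 1 - pq.1) * pq.2 + 2 ^ (n - pq.1) - 1 ≤ 2 ^ (n + 1) - 1 :=
  dyadic_cell_encoding_injective_general n
end

section
/- Let A be a finite alphabet and Σ ⊆ A^{ℤ×ℤ} a set of colourings of finite type. Define the dyadic encoding Φ(Σ) ⊆ (A × A)^{ℤ×ℤ} as the set of configurations z : ℤ × ℤ → A × A such that (i) the first-component configuration π₁ ∘ z belongs to Σ, and (ii) the second component satisfies π₂(z(n+1, 2k)) = π₁(z(n, k)) and π₂(z(n+1, 2k+1)) = π₂(z(n, k)) for all n, k ∈ ℤ. Then Φ(Σ) is a set of colourings of finite type over the alphabet A × A. -/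
instance (n : ℕ) : DecidablePred (· ∈ U n) := fun pq =>
  inferInstanceAs (Decidable (pq.1 ≤ n - 1 ∧ pq.2 ≤ 2 ^ pq.1 - 1))

instance (n : ℕ) : Fintype (U n) :=
  Fintype.ofFinset ((Finset.range (n + 1) ×ˢ Finset.range (2 ^ (n + 1))).filter (· ∈ U n))
    (by
      intro pq
      simp only [Finset.mem_filter, Finset.mem_product, Finset.mem_range]
      constructor
      · exact fun h => h.2
      · intro h
        obtain ⟨h1, h2⟩ := h
        refine ⟨⟨by omega, ?_⟩, ⟨h1, h2⟩⟩
        have hp : 2 ^ pq.1 ≤ 2 ^ (n + 1) := Nat.pow_le_pow_right (by norm_num) (by omega)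
        have : 0 < 2 ^ pq.1 := Nat.pow_pos (by norm_num)
        omega)

/-- A pattern over alphabet `A`: a size `n+1 ≥ 1` together with a colouring of `𝕌_{n+1}`. -/
def Pattern (A : Type) : Type := Σ n : ℕ, (U (n + 1) → A)

/-- The size of a pattern (always ≥ 1). -/
def Pattern.size {A : Type} (P : Pattern A) : ℕ := P.1 + 1

instance {A : Type} [Encodable A] (n : ℕ) : Encodable (↥(U n) → A) :=
  Encodable.fintypeArrowOfEncodable

instance {A : Type} [Encodable A] : Encodable (Pattern A) :=
  inferInstanceAs (Encodable (Σ n : ℕ, (U (n + 1) → A)))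

/-- The pattern `P` appears somewhere in the configuration `x`. -/
def Pattern.Appears {A : Type} (P : Pattern A) (x : ℤ × ℤ → A) : Prop :=
  ∃ g : ℤ × ℤ, AppearsAt P.2 x g

/-- The set of colourings avoiding every pattern of `F`. -/
def colourings {A : Type} (F : Set (Pattern A)) : Set ((ℤ × ℤ) → A) :=
  {x | ∀ P ∈ F, ¬ P.Appears x}

/-- A set of colourings is of finite type (CFT). -/
def IsCFT {A : Type} (S : Set ((ℤ × ℤ) → A)) : Prop :=
  ∃ F : Set (Pattern A), F.Finite ∧ S = colourings F

/-- A set of colourings is sofic: letter-to-letter projection of a CFT. -/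
def IsSofic {A : Type} (S : Set ((ℤ × ℤ) → A)) : Prop :=
  ∃ (B : Type) (_ : Fintype B) (S' : Set ((ℤ × ℤ) → B)) (φ : B → A),
    IsCFT S' ∧ S = (fun w => φ ∘ w) '' S'

/-- A set of colourings is effective: defined by a set of forbidden patterns whose
set of codes (under the standard encoding of patterns) is recursively enumerable. -/
def IsEffective {A : Type} [Encodable A] (S : Set ((ℤ × ℤ) → A)) : Prop :=
  ∃ F : Set (Pattern A),
    REPred (fun c : ℕ => ∃ P ∈ F, Encodable.encode P = c) ∧ S = colourings F

/-- The dyadic encoding of a set of colourings `S`: configurations over `A × A` whose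
first component lies in `S` and whose second component is the dyadic encoding of the
first one, i.e. `π₂(z(n+1, 2k)) = π₁(z(n, k))` and `π₂(z(n+1, 2k+1)) = π₂(z(n, k))`. -/
def DyadicImage {A : Type} (S : Set ((ℤ × ℤ) → A)) : Set ((ℤ × ℤ) → A × A) :=
  {z | (fun g => (z g).1) ∈ S ∧
    ∀ n k : ℤ, (z (n + 1, 2 * k)).2 = (z (n, k)).1 ∧ (z (n + 1, 2 * k + 1)).2 = (z (n, k)).2}

/-! Both defining conditions of `DyadicImage S` are local. Condition (i) is forbidden by the
patterns over `A × A` whose first component is a forbidden pattern of `S`, finitely many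
since the alphabet is finite; condition (ii) only involves a cell and its two children, so it
is forbidden by the finitely many patterns of size 2 violating it. -/

section Colourings

variable {A B : Type}

def window (x : ℤ × ℤ → A) (n : ℕ) (g : ℤ × ℤ) : U n → A :=
  fun pq => x (g.1 + (pq.1.1 : ℤ), 2 ^ pq.1.1 * g.2 + (pq.1.2 : ℤ))

theorem appearsAt_iff_eq_window {n : ℕ} (P : U n → A) (x : ℤ × ℤ → A) (g : ℤ × ℤ) :
    AppearsAt P x g ↔ P = window x n g :=
  ⟨fun h => funext fun pq => (h pq).symm, fun h _ => h ▸ rfl⟩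

theorem window_comp (f : A → B) (x : ℤ × ℤ → A) (n : ℕ) (g : ℤ × ℤ) :
    window (f ∘ x) n g = f ∘ window x n g :=
  rfl

theorem colourings_union (F G : Set (Pattern A)) :
    colourings (F ∪ G) = colourings F ∩ colourings G := by
  ext x
  simp only [colourings, Set.mem_union, Set.mem_inter_iff, Set.mem_ofPred_eq, or_imp, forall_and]

end Colourings

namespace Pattern

variable {A B : Type}

def map (f : A → B) (P : Pattern A) : Pattern B :=
  ⟨P.1, f ∘ P.2⟩

theorem finite_preimage_map [Fintype A] (f : A → B) {F : Set (Pattern B)} (hF : F.Finite) :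
    (map f ⁻¹' F).Finite :=
  (hF.biUnion fun P _ => Set.finite_range (Sigma.mk (β := fun n => U (n + 1) → A) P.1)).subset
    fun Q hQ => Set.mem_biUnion hQ ⟨Q.2, rfl⟩

theorem colourings_preimage_map (f : A → B) (F : Set (Pattern B)) :
    colourings (map f ⁻¹' F) = (fun x => f ∘ x) ⁻¹' colourings F := by
  ext x
  constructor
  · rintro hx P hP ⟨g, hg⟩
    rw [appearsAt_iff_eq_window, window_comp] at hg
    have hmap : map f ⟨P.1, window x (P.1 + 1) g⟩ = P := Sigma.ext rfl (heq_of_eq hg.symm)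
    exact hx ⟨P.1, window x (P.1 + 1) g⟩ (Set.mem_preimage.2 (hmap ▸ hP))
      ⟨g, (appearsAt_iff_eq_window _ _ _).2 rfl⟩
  · rintro hx Q hQ ⟨g, hg⟩
    rw [appearsAt_iff_eq_window] at hg
    refine hx _ hQ ⟨g, (appearsAt_iff_eq_window _ _ _).2 ?_⟩
    rw [map, hg, window_comp]

end Pattern

namespace U

def root : U 2 := ⟨(0, 0), by decide, by decide⟩
def leftChild : U 2 := ⟨(1, 0), by decide, by decide⟩
def rightChild : U 2 := ⟨(1, 1), by decide, by decide⟩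

end U

section Dyadic

variable (A : Type)

def IsDyadicStep (f : U 2 → A × A) : Prop :=
  (f U.leftChild).2 = (f U.root).1 ∧ (f U.rightChild).2 = (f U.root).2

def dyadicForbidden : Set (Pattern (A × A)) :=
  Sigma.mk 1 '' {f | ¬ IsDyadicStep A f}

theorem dyadicForbidden_finite [Fintype A] : (dyadicForbidden A).Finite :=
  (Set.toFinite _).image _

variable {A}

theorem isDyadicStep_window_iff (z : ℤ × ℤ → A × A) (n k : ℤ) :
    IsDyadicStep A (window z 2 (n, k)) ↔
      (z (n + 1, 2 * k)).2 = (z (n, k)).1 ∧ (z (n + 1, 2 * k + 1)).2 = (z (n, k)).2 := by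
  simp [IsDyadicStep, window, U.root, U.leftChild, U.rightChild]

theorem colourings_dyadicForbidden :
    colourings (dyadicForbidden A) = {z | ∀ n k : ℤ,
      (z (n + 1, 2 * k)).2 = (z (n, k)).1 ∧ (z (n + 1, 2 * k + 1)).2 = (z (n, k)).2} := by
  ext z
  simp only [colourings, Set.mem_ofPred_eq, ← isDyadicStep_window_iff]
  constructor
  · intro h n k
    by_contra hstep
    exact h _ ⟨_, hstep, rfl⟩ ⟨(n, k), (appearsAt_iff_eq_window _ _ _).2 rfl⟩
  · rintro h _ ⟨f, hf, rfl⟩ ⟨g, hg⟩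
    obtain rfl : f = window z 2 g := (appearsAt_iff_eq_window _ _ _).1 hg
    exact hf (h g.1 g.2)

end Dyadic

theorem dyadicImage_isCFT_general {A : Type} [Fintype A]
    (S : Set ((ℤ × ℤ) → A)) (hS : IsCFT S) : IsCFT (DyadicImage S) := by
  obtain ⟨F, hF, rfl⟩ := hS
  refine ⟨Pattern.map Prod.fst ⁻¹' F ∪ dyadicForbidden A,
    (Pattern.finite_preimage_map Prod.fst hF).union (dyadicForbidden_finite A), ?_⟩
  rw [colourings_union, Pattern.colourings_preimage_map, colourings_dyadicForbidden]
  rfl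

/-- The dyadic encoding of a set of colourings of finite type is of finite type. -/
theorem dyadicImage_isCFT {A : Type} [Fintype A] [Nonempty A]
    (S : Set ((ℤ × ℤ) → A)) (hS : IsCFT S) : IsCFT (DyadicImage S) :=
  dyadicImage_isCFT_general S hS
end
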